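/- Let x_{L_n}(t) denote the common opinion of level n at time t in the level graph with |L_n| = 2^n - 1 and full bipartite connections between consecutive levels and full connections within levels. Then for every n ≥ 0 and t ≥ 2, x_{L_n}(t) = x_{L_{n+1}}(t-1). -/
import Mathlib

/-- Level `n` of the level graph: `2^n - 1` vertices `(n, k)`. -/
def levelSet (n : ℕ) : Finset (ℕ × ℕ) := {n} ×ˢ Finset.range (2 ^ n - 1)

/-- The neighbors of a vertex of level `n`: all vertices of levels
`n-1`, `n`, `n+1` other than itself. -/
def levelNbhdBase (v : ℕ × ℕ) : Finset (ℕ × ℕ) :=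
  (levelSet (v.1 - 1) ∪ levelSet v.1 ∪ levelSet (v.1 + 1)).erase v

/-- Tie-adjusted neighborhood: the vertex itself is added back whenever that
makes the cardinality odd. -/
def levelNbhd (v : ℕ × ℕ) : Finset (ℕ × ℕ) :=
  if Even (levelNbhdBase v).card then insert v (levelNbhdBase v)
  else levelNbhdBase v

lemma mem_levelSet {v : ℕ × ℕ} {n : ℕ} : v ∈ levelSet n ↔ v.1 = n ∧ v.2 < 2 ^ n - 1 := by
  rw [levelSet, Finset.mem_product]
  simp

lemma levelSet_card (n : ℕ) : (levelSet n).card = 2 ^ n - 1 := by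
  simp [levelSet]

lemma levelSet_disj {m n : ℕ} (h : m ≠ n) : Disjoint (levelSet m) (levelSet n) := by
  rw [Finset.disjoint_left]
  intro a ha hb
  rw [mem_levelSet] at ha hb
  exact h (ha.1 ▸ hb.1 ▸ rfl)

lemma even_sum_iff {s : Finset (ℕ × ℕ)} {f : ℕ × ℕ → ℤ}
    (hf : ∀ u ∈ s, Odd (f u)) : (Even (∑ u ∈ s, f u) ↔ Even s.card) := by
  induction s using Finset.cons_induction with
  | empty => simp
  | cons a s ha ih =>
    have hfa : Odd (f a) := hf a (Finset.mem_cons_self a s)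
    have ih' := ih (fun u hu => hf u (Finset.mem_cons.mpr (Or.inr hu)))
    rw [Finset.sum_cons, Finset.card_cons, Int.even_add, Nat.even_add_one]
    rw [ih', Int.not_odd_iff_even.symm]
    simp [hfa, Nat.even_add_one, Nat.not_even_iff_odd]

lemma sum_ne_zero {s : Finset (ℕ × ℕ)} {f : ℕ × ℕ → ℤ}
    (hf : ∀ u ∈ s, f u = 1 ∨ f u = -1) (hs : Odd s.card) : (∑ u ∈ s, f u) ≠ 0 := by
  have h : ¬ Even (∑ u ∈ s, f u) := by
    rw [even_sum_iff (fun u hu => by rcases hf u hu with h | h <;> rw [h] <;> decide)]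
    exact (Nat.not_even_iff_odd).mpr hs
  intro h0
  rw [h0] at h
  exact h Even.zero

lemma sign_pm {z : ℤ} (h : z ≠ 0) : Int.sign z = 1 ∨ Int.sign z = -1 := by
  rcases lt_or_gt_of_ne h with h' | h'
  · exact Or.inr (Int.sign_eq_neg_one_iff_neg.mpr h')
  · exact Or.inl (Int.sign_eq_one_iff_pos.mpr h')

lemma levelSet_one_eq : levelSet 1 = {(1, 0)} := by decide

lemma nbhd_one : levelNbhd (1, 0) = levelSet 2 := by decide

lemma nbhd_big {m : ℕ} {v : ℕ × ℕ} (hv : v ∈ levelSet (m + 2)) :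
    levelNbhd v = levelSet (m + 1) ∪ levelSet (m + 2) ∪ levelSet (m + 3) := by
  rw [mem_levelSet] at hv
  have hU : v ∈ levelSet (m + 1) ∪ levelSet (m + 2) ∪ levelSet (m + 3) := by
    rw [Finset.mem_union, Finset.mem_union]
    exact Or.inl (Or.inr (mem_levelSet.mpr hv))
  have hbase : levelNbhdBase v =
      (levelSet (m + 1) ∪ levelSet (m + 2) ∪ levelSet (m + 3)).erase v := by
    rw [levelNbhdBase, hv.1]
    norm_num
  have hcard : (levelSet (m + 1) ∪ levelSet (m + 2) ∪ levelSet (m + 3)).card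
      = (2 ^ (m + 1) - 1) + (2 ^ (m + 2) - 1) + (2 ^ (m + 3) - 1) := by
    rw [Finset.card_union_of_disjoint, Finset.card_union_of_disjoint]
    · simp [levelSet_card]
    · exact levelSet_disj (by omega)
    · rw [Finset.disjoint_union_left]
      exact ⟨levelSet_disj (by omega), levelSet_disj (by omega)⟩
  have heven : Even (levelNbhdBase v).card := by
    rw [hbase, Finset.card_erase_of_mem hU, hcard]
    have h2 : 1 ≤ 2 ^ m := Nat.one_le_two_pow
    have e1 : 2 ^ (m + 1) = 2 * 2 ^ m := by ring
    have e2 : 2 ^ (m + 2) = 4 * 2 ^ m := by ring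
    have e3 : 2 ^ (m + 3) = 8 * 2 ^ m := by ring
    refine ⟨7 * 2 ^ m - 2, by omega⟩
  rw [levelNbhd, if_pos heven, hbase, Finset.insert_erase hU]

section dyn

variable {x : ℕ → ℕ × ℕ → ℤ}
  (hx0 : ∀ v : ℕ × ℕ, x 0 v = 1 ∨ x 0 v = -1)
  (hdyn : ∀ (t : ℕ) (v : ℕ × ℕ),
      x (t + 1) v = Int.sign (∑ u ∈ levelNbhd v, x t u))

include hx0 hdyn in
lemma pm : ∀ t (v : ℕ × ℕ), v ∈ levelSet v.1 → x t v = 1 ∨ x t v = -1 := by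
  intro t
  induction t with
  | zero => intro v _; exact hx0 v
  | succ t ih =>
    intro v hv
    rw [hdyn]
    have hv' := mem_levelSet.mp hv
    have hn : 1 ≤ v.1 := by
      by_contra h
      have : v.1 = 0 := by omega
      rw [this] at hv'
      omega
    rcases Nat.lt_or_ge v.1 2 with h1 | h2
    · -- v.1 = 1, so v = (1,0)
      have hveq : v = (1, 0) := by
        have : v.1 = 1 := by omega
        have h0 : v.2 = 0 := by rw [this] at hv'; omega
        exact Prod.ext this h0
      subst hveq
      rw [nbhd_one]
      apply sign_pm
      apply sum_ne_zero
      · intro u hu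
        have hu' := mem_levelSet.mp hu
        exact ih u (mem_levelSet.mpr (by rw [hu'.1]; exact ⟨rfl, hu'.2⟩))
      · rw [levelSet_card]; decide
    · obtain ⟨m, hm⟩ : ∃ m, v.1 = m + 2 := ⟨v.1 - 2, by omega⟩
      have hvm : v ∈ levelSet (m + 2) := by rw [← hm]; exact hv
      rw [nbhd_big hvm]
      apply sign_pm
      apply sum_ne_zero
      · intro u hu
        rw [Finset.mem_union, Finset.mem_union] at hu
        rcases hu with (hu | hu) | hu <;>
        · have hu' := mem_levelSet.mp hu
          exact ih u (mem_levelSet.mpr (by rw [hu'.1]; exact ⟨rfl, hu'.2⟩))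
      · rw [Finset.card_union_of_disjoint, Finset.card_union_of_disjoint]
        · simp only [levelSet_card]
          have h2 : 1 ≤ 2 ^ m := Nat.one_le_two_pow
          have e1 : 2 ^ (m + 1) = 2 * 2 ^ m := by ring
          have e2 : 2 ^ (m + 2) = 4 * 2 ^ m := by ring
          have e3 : 2 ^ (m + 3) = 8 * 2 ^ m := by ring
          rw [Nat.odd_iff]
          omega
        · exact levelSet_disj (by omega)
        · rw [Finset.disjoint_union_left]
          exact ⟨levelSet_disj (by omega), levelSet_disj (by omega)⟩

include hdyn in
lemma level_const : ∀ t n (u v : ℕ × ℕ), u ∈ levelSet n → v ∈ levelSet n →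
    x (t + 1) u = x (t + 1) v := by
  intro t n u v hu hv
  rcases Nat.lt_or_ge n 2 with h1 | h2
  · interval_cases n
    · simp [levelSet] at hu
    · rw [levelSet_one_eq, Finset.mem_singleton] at hu hv
      rw [hu, hv]
  · obtain ⟨m, rfl⟩ : ∃ m, n = m + 2 := ⟨n - 2, by omega⟩
    rw [hdyn, hdyn, nbhd_big hu, nbhd_big hv]

include hdyn in
lemma sum_level : ∀ t n (w : ℕ × ℕ), w ∈ levelSet n →
    ∑ u ∈ levelSet n, x (t + 1) u = ((2 ^ n - 1 : ℕ) : ℤ) * x (t + 1) w := by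
  intro t n w hw
  rw [Finset.sum_congr rfl (fun u hu => level_const hdyn t n u w hu hw),
    Finset.sum_const, levelSet_card, nsmul_eq_mul]

lemma sign_dominant (m : ℕ) (a b c : ℤ) (ha : a = 1 ∨ a = -1) (hb : b = 1 ∨ b = -1)
    (hc : c = 1 ∨ c = -1) :
    Int.sign (((2 ^ (m + 1) - 1 : ℕ) : ℤ) * a + ((2 ^ (m + 2) - 1 : ℕ) : ℤ) * b
      + ((2 ^ (m + 3) - 1 : ℕ) : ℤ) * c) = c := by
  have hK : (1 : ℤ) ≤ 2 ^ m := one_le_pow₀ (by norm_num)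
  have cast1 : ∀ k : ℕ, ((2 ^ (m + k) - 1 : ℕ) : ℤ) = 2 ^ k * 2 ^ m - 1 := by
    intro k
    have h : (1 : ℕ) ≤ 2 ^ (m + k) := Nat.one_le_two_pow
    push_cast [h]
    ring
  rw [cast1 1, cast1 2, cast1 3]
  norm_num
  rcases ha with rfl | rfl <;> rcases hb with rfl | rfl <;> rcases hc with rfl | rfl <;>
    simp only [mul_one, mul_neg_one] <;>
    first
      | exact Int.sign_eq_one_iff_pos.mpr (by linarith)
      | exact Int.sign_eq_neg_one_iff_neg.mpr (by linarith)

end dyn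

/-- **Level recurrence in the level graph.**  Under majority dynamics on the
level graph (levels of sizes `2^n - 1`, consecutive levels completely joined,
levels internally complete), from time `1` on all vertices of a level share a
common opinion `x_{L_n}(t)`, and for every `n` and every `t ≥ 2`,
`x_{L_n}(t) = x_{L_{n+1}}(t-1)`. -/
theorem level_graph_recurrence
    (x : ℕ → ℕ × ℕ → ℤ)
    (hx0 : ∀ v : ℕ × ℕ, x 0 v = 1 ∨ x 0 v = -1)
    (hdyn : ∀ (t : ℕ) (v : ℕ × ℕ),
      x (t + 1) v = Int.sign (∑ u ∈ levelNbhd v, x t u)) :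
    ∀ (n t : ℕ), 2 ≤ t →
      ∀ u ∈ levelSet n, ∀ v ∈ levelSet (n + 1), x t u = x (t - 1) v := by
  intro n t ht u hu v hv
  obtain ⟨s, rfl⟩ : ∃ s, t = s + 2 := ⟨t - 2, by omega⟩
  have hts : s + 2 - 1 = s + 1 := by omega
  rw [hts]
  have hu' := mem_levelSet.mp hu
  have hn : 1 ≤ n := by
    by_contra h
    have : n = 0 := by omega
    rw [this] at hu'
    omega
  have hvpm : x (s + 1) v = 1 ∨ x (s + 1) v = -1 := by
    have hv' := mem_levelSet.mp hv
    exact pm hx0 hdyn (s + 1) v (mem_levelSet.mpr (by rw [hv'.1]; exact ⟨rfl, hv'.2⟩))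
  rcases Nat.lt_or_ge n 2 with h1 | h2
  · -- n = 1
    have hn1 : n = 1 := by omega
    subst hn1
    have hueq : u = (1, 0) := Prod.ext hu'.1 (by omega)
    subst hueq
    rw [show s + 2 = (s + 1) + 1 from rfl, hdyn, nbhd_one,
      sum_level hdyn s 2 v hv]
    rcases hvpm with h | h <;> rw [h] <;> decide
  · obtain ⟨m, rfl⟩ : ∃ m, n = m + 2 := ⟨n - 2, by omega⟩
    have hw1 : ((m + 1 : ℕ), (0 : ℕ)) ∈ levelSet (m + 1) := by
      rw [mem_levelSet]
      refine ⟨rfl, ?_⟩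
      have : 2 ≤ 2 ^ (m + 1) := by
        have : 1 ≤ 2 ^ m := Nat.one_le_two_pow
        calc 2 ≤ 2 * 2 ^ m := by omega
        _ = 2 ^ (m + 1) := by ring
      omega
    have hdisj1 : Disjoint (levelSet (m + 1)) (levelSet (m + 2)) := levelSet_disj (by omega)
    have hdisj2 : Disjoint (levelSet (m + 1) ∪ levelSet (m + 2)) (levelSet (m + 3)) := by
      rw [Finset.disjoint_union_left]
      exact ⟨levelSet_disj (by omega), levelSet_disj (by omega)⟩
    rw [show s + 2 = (s + 1) + 1 from rfl, hdyn, nbhd_big hu,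
      Finset.sum_union hdisj2, Finset.sum_union hdisj1,
      sum_level hdyn s (m + 1) _ hw1, sum_level hdyn s (m + 2) u hu,
      sum_level hdyn s (m + 3) v hv]
    have hapm := pm hx0 hdyn (s + 1) ((m + 1 : ℕ), (0 : ℕ)) hw1
    have hupm : x (s + 1) u = 1 ∨ x (s + 1) u = -1 := by
      exact pm hx0 hdyn (s + 1) u (mem_levelSet.mpr (by rw [hu'.1]; exact ⟨rfl, hu'.2⟩))
    exact sign_dominant m _ _ _ hapm hupm hvpm
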